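/- Assume f is L-smooth, satisfies the PL condition with constant μ, g satisfies ER(ρ) with noise σ². For SGD with constant step size γ ≤ 1/(L(1 + 2ρ/μ)), E[f(x^k) - f*] ≤ (1 - γμ)^k (f(x^0) - f*) + Lγσ²/μ. -/

import Mathlib

open scoped RealInnerProductSpace
open Finset

/-!
Smoothness along the step `x ↦ x - γ gᵢ(x)` gives, after averaging over `i`,
`E f(x⁺) ≤ f(x) - γ‖∇f(x)‖² + (Lγ²/2) E‖g(x)‖²`. The bias–variance split of `E‖g(x)‖²` around
its mean `∇f(x)`, with `ER(ρ)` for the fluctuation, bounds it by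
`4ρ(f(x) - f*) + 2σ² + ‖∇f(x)‖²`. With PL this is the one-step contraction
`E[f(x⁺) - f*] ≤ (1 - γμ)(f(x) - f*) + Lγ²σ²`, valid as soon as `Lγ(μ + 2ρ) ≤ μ`, which is the
step-size condition. The expectation over the first `k` samples is a finite sum weighted by
`∏ p(ωₛ)`; conditioning on the first `k` samples turns the one-step bound into the affine
recursion `aₖ₊₁ ≤ (1 - γμ) aₖ + γμ · Lγσ²/μ`, which unrolls to the claim.
-/

section WeightedMeans

variable {E : Type*} [NormedAddCommGroup E] [InnerProductSpace ℝ E]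
  {ι : Type*} [Fintype ι] {p : ι → ℝ}

theorem sum_mul_inner_right (a : E) (v : ι → E) :
    ∑ i, p i * ⟪a, v i⟫ = ⟪a, ∑ i, p i • v i⟫ := by
  simp only [inner_sum, real_inner_smul_right]

theorem norm_add_sq_le_two_mul_add (a b : E) : ‖a + b‖ ^ 2 ≤ 2 * ‖a‖ ^ 2 + 2 * ‖b‖ ^ 2 := by
  nlinarith [parallelogram_law_with_norm ℝ a b, sq_nonneg ‖a - b‖]

theorem sum_mul_norm_sq_eq_sum_mul_norm_sub_sq_add (hp1 : ∑ i, p i = 1) (v : ι → E) :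
    ∑ i, p i * ‖v i‖ ^ 2 =
      ∑ i, p i * ‖v i - ∑ j, p j • v j‖ ^ 2 + ‖∑ j, p j • v j‖ ^ 2 := by
  set m := ∑ j, p j • v j
  have hcentered : ∑ i, p i • (v i - m) = 0 := by
    simp only [smul_sub, sum_sub_distrib, ← sum_smul, hp1, one_smul, m, sub_self]
  have hexpand (i : ι) :
      p i * ‖v i‖ ^ 2 = p i * ‖v i - m‖ ^ 2 + 2 * ⟪p i • (v i - m), m⟫ + p i * ‖m‖ ^ 2 := by
    rw [← sub_add_cancel (v i) m, norm_add_sq_real, add_sub_cancel_right, real_inner_smul_left]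
    ring
  simp only [hexpand, sum_add_distrib, ← mul_sum, ← sum_mul, ← sum_inner, hcentered, hp1,
    inner_zero_left, mul_zero, add_zero, one_mul]

theorem sum_mul_norm_sq_le_residual_add (hp0 : ∀ i, 0 ≤ p i) (hp1 : ∑ i, p i = 1) (v w : ι → E) :
    ∑ i, p i * ‖v i‖ ^ 2 ≤
      2 * ∑ i, p i * ‖v i - w i - ∑ j, p j • v j‖ ^ 2 + 2 * ∑ i, p i * ‖w i‖ ^ 2 +
        ‖∑ j, p j • v j‖ ^ 2 := by
  rw [sum_mul_norm_sq_eq_sum_mul_norm_sub_sq_add hp1, mul_sum, mul_sum, ← sum_add_distrib]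
  gcongr with i
  have h := norm_add_sq_le_two_mul_add (v i - w i - ∑ j, p j • v j) (w i)
  rw [show v i - w i - ∑ j, p j • v j + w i = v i - ∑ j, p j • v j by abel] at h
  linarith [mul_le_mul_of_nonneg_left h (hp0 i)]

end WeightedMeans

section Smooth

variable {E : Type*} [NormedAddCommGroup E] [InnerProductSpace ℝ E]
  {f : E → ℝ} {gradf : E → E} {L μ fstar : ℝ}

theorem apply_sub_smul_le_of_smooth
    (hsmooth : ∀ x z : E, f z ≤ f x + ⟪gradf x, z - x⟫ + L / 2 * ‖z - x‖ ^ 2)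
    (y v : E) (γ : ℝ) :
    f (y - γ • v) ≤ f y - γ * ⟪gradf y, v⟫ + L / 2 * γ ^ 2 * ‖v‖ ^ 2 := by
  have h := hsmooth y (y - γ • v)
  rw [sub_sub_cancel_left, inner_neg_right, real_inner_smul_right, norm_neg, norm_smul,
    Real.norm_eq_abs, mul_pow, sq_abs] at h
  linarith

theorem norm_sq_le_of_smooth
    (hsmooth : ∀ x z : E, f z ≤ f x + ⟪gradf x, z - x⟫ + L / 2 * ‖z - x‖ ^ 2)
    (hL : 0 < L) (hmin : ∀ x, fstar ≤ f x) (y : E) :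
    ‖gradf y‖ ^ 2 ≤ 2 * L * (f y - fstar) := by
  have h := apply_sub_smul_le_of_smooth hsmooth y (gradf y) L⁻¹
  rw [real_inner_self_eq_norm_sq] at h
  have hdescent : L / 2 * L⁻¹ ^ 2 * ‖gradf y‖ ^ 2 = L⁻¹ * ‖gradf y‖ ^ 2 / 2 := by
    field_simp
  have := hmin (y - L⁻¹ • gradf y)
  calc ‖gradf y‖ ^ 2 = L * (L⁻¹ * ‖gradf y‖ ^ 2) := by field_simp
    _ ≤ L * (2 * (f y - fstar)) := mul_le_mul_of_nonneg_left (by linarith) hL.le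
    _ = 2 * L * (f y - fstar) := by ring

theorem le_of_smooth_of_PL
    (hsmooth : ∀ x z : E, f z ≤ f x + ⟪gradf x, z - x⟫ + L / 2 * ‖z - x‖ ^ 2)
    (hL : 0 < L) (hPL : ∀ x : E, ‖gradf x‖ ^ 2 ≥ 2 * μ * (f x - fstar))
    (hmin : ∀ x, fstar ≤ f x) {y : E} (hy : f y ≠ fstar) : μ ≤ L := by
  have hgap : 0 < f y - fstar := sub_pos.2 ((hmin y).lt_of_ne' hy)
  have := (hPL y).trans (norm_sq_le_of_smooth hsmooth hL hmin y)
  nlinarith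

end Smooth

section SGDStep

variable {E : Type*} [NormedAddCommGroup E] [InnerProductSpace ℝ E]
  {ι : Type*} [Fintype ι] {p : ι → ℝ} {f : E → ℝ} {gradf : E → E} {g : ι → E → E}
  {L μ ρ σ2 γ fstar : ℝ} {xstar : E}

theorem sum_mul_norm_sq_le_of_expectedResidual (hp0 : ∀ i, 0 ≤ p i) (hp1 : ∑ i, p i = 1)
    (hgs : gradf xstar = 0) (hunbiased : ∀ x : E, ∑ i, p i • g i x = gradf x)
    (hER : ∀ x : E, (∑ i, p i * ‖g i x - g i xstar - (gradf x - gradf xstar)‖ ^ 2) ≤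
        2 * ρ * (f x - fstar))
    (hσ : (∑ i, p i * ‖g i xstar‖ ^ 2) = σ2) (y : E) :
    ∑ i, p i * ‖g i y‖ ^ 2 ≤ 4 * ρ * (f y - fstar) + 2 * σ2 + ‖gradf y‖ ^ 2 := by
  have h := sum_mul_norm_sq_le_residual_add hp0 hp1 (fun i => g i y) (fun i => g i xstar)
  have hresidual := hER y
  simp only [hunbiased, hσ] at h
  rw [hgs, sub_zero] at hresidual
  linarith

theorem sgd_step_expected_gap_le (hp0 : ∀ i, 0 ≤ p i) (hp1 : ∑ i, p i = 1)
    (hsmooth : ∀ x z : E, f z ≤ f x + ⟪gradf x, z - x⟫ + L / 2 * ‖z - x‖ ^ 2)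
    (hPL : ∀ x : E, ‖gradf x‖ ^ 2 ≥ 2 * μ * (f x - fstar))
    (hmin : ∀ x, fstar ≤ f x) (hgs : gradf xstar = 0)
    (hunbiased : ∀ x : E, ∑ i, p i • g i x = gradf x)
    (hER : ∀ x : E, (∑ i, p i * ‖g i x - g i xstar - (gradf x - gradf xstar)‖ ^ 2) ≤
        2 * ρ * (f x - fstar))
    (hσ : (∑ i, p i * ‖g i xstar‖ ^ 2) = σ2)
    (hL : 0 ≤ L) (hμ : 0 < μ) (hρ : 0 ≤ ρ) (hγ0 : 0 ≤ γ) (hγ : L * γ * (μ + 2 * ρ) ≤ μ)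
    (y : E) :
    ∑ i, p i * (f (y - γ • g i y) - fstar) ≤ (1 - γ * μ) * (f y - fstar) + L * γ ^ 2 * σ2 := by
  have hinner : ∑ i, p i * ⟪gradf y, g i y⟫ = ‖gradf y‖ ^ 2 := by
    rw [sum_mul_inner_right, hunbiased, real_inner_self_eq_norm_sq]
  have hdescent : ∑ i, p i * (f (y - γ • g i y) - fstar) ≤
      f y - fstar - γ * ‖gradf y‖ ^ 2 + L / 2 * γ ^ 2 * ∑ i, p i * ‖g i y‖ ^ 2 :=
    calc _ ≤ ∑ i, p i * (f y - fstar - γ * ⟪gradf y, g i y⟫ + L / 2 * γ ^ 2 * ‖g i y‖ ^ 2) := by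
          gcongr with i
          · exact hp0 i
          · linarith [apply_sub_smul_le_of_smooth hsmooth y (g i y) γ]
      _ = _ := by
          simp only [mul_add, mul_sub, sum_add_distrib, sum_sub_distrib, ← sum_mul, hp1,
            mul_left_comm (p _), ← mul_sum, hinner, one_mul]
  have hmoment := sum_mul_norm_sq_le_of_expectedResidual hp0 hp1 hgs hunbiased hER hσ y
  have hLγ : L * γ ≤ 1 := by nlinarith [mul_nonneg (mul_nonneg hL hγ0) hρ]
  have hgap := sub_nonneg.2 (hmin y)
  nlinarith [mul_le_mul_of_nonneg_left hmoment (by positivity : 0 ≤ L / 2 * γ ^ 2),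
    mul_le_mul_of_nonneg_left (hPL y) (by nlinarith : 0 ≤ γ * (1 - L * γ / 2)),
    mul_nonneg (mul_nonneg hγ0 hgap) (by linarith : 0 ≤ μ - L * γ * (μ + 2 * ρ))]

end SGDStep

theorem le_one_sub_pow_mul_add_of_le {a : ℕ → ℝ} {r b : ℝ} (hr : r ≤ 1) (hb : 0 ≤ b)
    (h : ∀ k, a (k + 1) ≤ (1 - r) * a k + r * b) (k : ℕ) :
    a k ≤ (1 - r) ^ k * a 0 + b := by
  induction k with
  | zero => simpa using hb
  | succ k ih =>
    calc a (k + 1) ≤ (1 - r) * ((1 - r) ^ k * a 0 + b) + r * b :=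
          (h k).trans (by gcongr)
      _ = (1 - r) ^ (k + 1) * a 0 + b := by ring

section SamplePaths

variable {ι α : Type*}

def extendByDefault [Inhabited ι] {k : ℕ} (ω : Fin k → ι) : ℕ → ι :=
  fun m => if h : m < k then ω ⟨m, h⟩ else default

theorem extendByDefault_snoc_of_lt [Inhabited ι] {n m : ℕ} (ω : Fin n → ι) (i : ι)
    (hm : m < n) : extendByDefault (Fin.snoc (α := fun _ => ι) ω i) m = extendByDefault ω m := by
  simp [extendByDefault, Fin.snoc, hm, hm.trans n.lt_succ_self]

theorem extendByDefault_snoc_self [Inhabited ι] {n : ℕ} (ω : Fin n → ι) (i : ι) :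
    extendByDefault (Fin.snoc (α := fun _ => ι) ω i) n = i := by
  simp [extendByDefault, Fin.snoc]

variable {x : ℕ → (ℕ → ι) → α} {x0 : α} {step : ι → α → α}

theorem iterate_congr (hx0 : ∀ ω, x 0 ω = x0) (hrec : ∀ k ω, x (k + 1) ω = step (ω k) (x k ω))
    {k : ℕ} {ω ω' : ℕ → ι} (h : ∀ m < k, ω m = ω' m) : x k ω = x k ω' := by
  induction k with
  | zero => rw [hx0, hx0]
  | succ k ih =>
    rw [hrec, hrec, ih fun m hm => h m (hm.trans k.lt_succ_self), h k k.lt_succ_self]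

theorem iterate_extendByDefault_snoc [Inhabited ι] (hx0 : ∀ ω, x 0 ω = x0)
    (hrec : ∀ k ω, x (k + 1) ω = step (ω k) (x k ω)) {n : ℕ} (ω : Fin n → ι) (i : ι) :
    x (n + 1) (extendByDefault (Fin.snoc (α := fun _ => ι) ω i)) =
      step i (x n (extendByDefault ω)) := by
  rw [hrec, extendByDefault_snoc_self,
    iterate_congr hx0 hrec fun m hm => extendByDefault_snoc_of_lt ω i hm]

end SamplePaths

section ProductWeights

variable {ι : Type*} [Fintype ι] {p : ι → ℝ}

theorem sum_prod_eq_one (hp1 : ∑ i, p i = 1) (n : ℕ) : ∑ ω : Fin n → ι, ∏ s, p (ω s) = 1 := by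
  rw [← Fintype.prod_sum]
  simp [hp1]

theorem sum_prod_mul_eq_sum_prod_mul_sum_snoc {n : ℕ} (F : (Fin (n + 1) → ι) → ℝ) :
    ∑ ω : Fin (n + 1) → ι, (∏ s, p (ω s)) * F ω =
      ∑ ω : Fin n → ι, (∏ s, p (ω s)) * ∑ i, p i * F (Fin.snoc ω i) := by
  rw [← (Fin.snocEquiv fun _ => ι).sum_comp, Fintype.sum_prod_type, sum_comm]
  refine sum_congr rfl fun ω _ => ?_
  rw [mul_sum]
  refine sum_congr rfl fun i _ => ?_
  change (∏ s, p (Fin.snoc (α := fun _ => ι) ω i s)) * F (Fin.snoc ω i) = _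
  simp only [Fin.prod_univ_castSucc, Fin.snoc_castSucc, Fin.snoc_last]
  ring

theorem sum_prod_mul_le_of_sum_snoc_le (hp0 : ∀ i, 0 ≤ p i) (hp1 : ∑ i, p i = 1) {n : ℕ}
    {F : (Fin (n + 1) → ι) → ℝ} {G : (Fin n → ι) → ℝ} {q c : ℝ}
    (h : ∀ ω, ∑ i, p i * F (Fin.snoc ω i) ≤ q * G ω + c) :
    ∑ ω : Fin (n + 1) → ι, (∏ s, p (ω s)) * F ω ≤
      q * ∑ ω : Fin n → ι, (∏ s, p (ω s)) * G ω + c := by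
  calc _ ≤ ∑ ω : Fin n → ι, (∏ s, p (ω s)) * (q * G ω + c) := by
        rw [sum_prod_mul_eq_sum_prod_mul_sum_snoc]
        gcongr with ω
        · exact prod_nonneg fun s _ => hp0 _
        · exact h ω
    _ = q * ∑ ω : Fin n → ι, (∏ s, p (ω s)) * G ω + c * ∑ ω : Fin n → ι, ∏ s, p (ω s) := by
        rw [mul_sum, mul_sum, ← sum_add_distrib]
        exact sum_congr rfl fun ω _ => by ring
    _ = _ := by rw [sum_prod_eq_one hp1, mul_one]

end ProductWeights

theorem sgd_PL_constant_step_general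
    {E : Type*} [NormedAddCommGroup E] [InnerProductSpace ℝ E]
    {ι : Type*} [Fintype ι] [Inhabited ι] (p : ι → ℝ)
    (hp0 : ∀ i, 0 ≤ p i) (hp1 : ∑ i, p i = 1)
    (f : E → ℝ) (gradf : E → E) (g : ι → E → E)
    (L μ ρ σ2 γ fstar : ℝ) (xstar x0 : E)
    (hL : 0 < L) (hμ : 0 < μ) (hρ : 0 ≤ ρ)
    (hsmooth : ∀ x z : E, f z ≤ f x + ⟪gradf x, z - x⟫ + L / 2 * ‖z - x‖ ^ 2)
    (hPL : ∀ x : E, ‖gradf x‖ ^ 2 ≥ 2 * μ * (f x - fstar))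
    (hmin : ∀ x, fstar ≤ f x) (hgs : gradf xstar = 0)
    (hunbiased : ∀ x : E, ∑ i, p i • g i x = gradf x)
    (hER : ∀ x : E, (∑ i, p i * ‖g i x - g i xstar - (gradf x - gradf xstar)‖ ^ 2) ≤
        2 * ρ * (f x - fstar))
    (hσ : (∑ i, p i * ‖g i xstar‖ ^ 2) = σ2)
    (hγ0 : 0 < γ) (hγ : γ ≤ 1 / (L * (1 + 2 * ρ / μ)))
    (x : ℕ → (ℕ → ι) → E)
    (hx0 : ∀ ω, x 0 ω = x0)
    (hrec : ∀ k ω, x (k + 1) ω = x k ω - γ • g (ω k) (x k ω)) :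
    ∀ k : ℕ,
      (∑ ω : Fin k → ι, (∏ s, p (ω s)) *
          (f (x k (fun m => if h : m < k then ω ⟨m, h⟩ else default)) - fstar)) ≤
        (1 - γ * μ) ^ k * (f x0 - fstar) + L * γ * σ2 / μ := by
  intro k
  have hσ2 : 0 ≤ σ2 := hσ ▸ sum_nonneg fun i _ => mul_nonneg (hp0 i) (sq_nonneg _)
  -- Unless `f ≡ f*`, PL and smoothness force `μ ≤ L`, so the contraction factor `1 - γμ` is `≥ 0`.
  obtain hconst | ⟨y, hy⟩ := forall_or_exists_not fun y => f y = fstar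
  · simp only [hconst, sub_self, mul_zero, sum_const_zero, zero_add]
    positivity
  have hstep : L * γ * (μ + 2 * ρ) ≤ μ := by
    have h := (le_div_iff₀ (by positivity)).1 hγ
    calc L * γ * (μ + 2 * ρ) = γ * (L * (1 + 2 * ρ / μ)) * μ := by field_simp
      _ ≤ μ := by nlinarith
  have hγμ : γ * μ ≤ 1 := by
    nlinarith [le_of_smooth_of_PL hsmooth hL hPL hmin hy, mul_nonneg hL.le hγ0.le]
  let gap (n : ℕ) : ℝ :=
    ∑ ω : Fin n → ι, (∏ s, p (ω s)) * (f (x n (extendByDefault ω)) - fstar)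
  have hgap_succ (n : ℕ) : gap (n + 1) ≤ (1 - γ * μ) * gap n + γ * μ * (L * γ * σ2 / μ) := by
    rw [show γ * μ * (L * γ * σ2 / μ) = L * γ ^ 2 * σ2 by field_simp]
    refine sum_prod_mul_le_of_sum_snoc_le hp0 hp1 fun ω => ?_
    simp only [iterate_extendByDefault_snoc (step := fun i z => z - γ • g i z) hx0 hrec]
    exact sgd_step_expected_gap_le hp0 hp1 hsmooth hPL hmin hgs hunbiased hER hσ hL.le hμ hρ
      hγ0.le hstep _
  have hgap_zero : gap 0 = f x0 - fstar := by simp [gap, hx0]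
  exact (le_one_sub_pow_mul_add_of_le hγμ (by positivity) hgap_succ k).trans_eq (by rw [hgap_zero])

/-- SGD on an `L`-smooth function satisfying the PL condition, under the Expected Residual
condition, with constant step size `γ ≤ 1/(L(1 + 2ρ/μ))`:
`E[f(x^k) - f*] ≤ (1 - γμ)^k (f(x⁰) - f*) + Lγσ²/μ`. -/
theorem sgd_PL_constant_step
    {E : Type*} [NormedAddCommGroup E] [InnerProductSpace ℝ E]
    {ι : Type*} [Fintype ι] [Inhabited ι] (p : ι → ℝ)
    (hp0 : ∀ i, 0 ≤ p i) (hp1 : ∑ i, p i = 1)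
    (f : E → ℝ) (gradf : E → E) (g : ι → E → E)
    (L μ ρ σ2 γ fstar : ℝ) (xstar x0 : E)
    (hL : 0 < L) (hμ : 0 < μ) (hρ : 0 ≤ ρ)
    (hsmooth : ∀ x z : E, f z ≤ f x + ⟪gradf x, z - x⟫ + L / 2 * ‖z - x‖ ^ 2)
    (hPL : ∀ x : E, ‖gradf x‖ ^ 2 ≥ 2 * μ * (f x - fstar))
    (hmin : ∀ x, fstar ≤ f x) (hfs : f xstar = fstar) (hgs : gradf xstar = 0)
    (hunbiased : ∀ x : E, ∑ i, p i • g i x = gradf x)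
    (hER : ∀ x : E, (∑ i, p i * ‖g i x - g i xstar - (gradf x - gradf xstar)‖ ^ 2) ≤
        2 * ρ * (f x - fstar))
    (hσ : (∑ i, p i * ‖g i xstar‖ ^ 2) = σ2)
    (hγ0 : 0 < γ) (hγ : γ ≤ 1 / (L * (1 + 2 * ρ / μ)))
    (x : ℕ → (ℕ → ι) → E)
    (hx0 : ∀ ω, x 0 ω = x0)
    (hrec : ∀ k ω, x (k + 1) ω = x k ω - γ • g (ω k) (x k ω)) :
    ∀ k : ℕ,
      (∑ ω : Fin k → ι, (∏ s, p (ω s)) *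
          (f (x k (fun m => if h : m < k then ω ⟨m, h⟩ else default)) - fstar)) ≤
        (1 - γ * μ) ^ k * (f x0 - fstar) + L * γ * σ2 / μ :=
  sgd_PL_constant_step_general p hp0 hp1 f gradf g L μ ρ σ2 γ fstar xstar x0 hL hμ hρ hsmooth hPL
    hmin hgs hunbiased hER hσ hγ0 hγ x hx0 hrec
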